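/- arXiv:2309.07261 — 4 statements merged into one kernel-verified Lean document; each statement's English description precedes it below -/
import Mathlib

section
/- Let Γ be a real p×r matrix of full column rank r, let Σ_w be a symmetric positive definite r×r real matrix, and let B be a real p×d matrix. Let λ_r(ΓΣ_wΓᵀ) denote the r-th largest eigenvalue of ΓΣ_wΓᵀ (its smallest nonzero eigenvalue). Then for every i ∈ {1,…,p} and j ∈ {1,…,d}, the (i,j) entry of P_Γ B satisfies |(P_Γ B)_{ij}| ≤ (max_{1≤ℓ≤p} (ΓΣ_wΓᵀ)_{ℓℓ})^{1/2} · ((ΓΣ_wΓᵀ)_{ii})^{1/2} · ‖B_j‖₁ / λ_r(ΓΣ_wΓᵀ), where B_j is the j-th column of B and ‖·‖₁ is the vector ℓ1-norm. (Entrywise bound from the proof of Proposition 2.1.) -/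
open Matrix MeasureTheory
open scoped BigOperators ENNReal

noncomputable def opNorm {m n : ℕ} (M : Matrix (Fin m) (Fin n) ℝ) : ℝ :=
  ‖LinearMap.toContinuousLinearMap (Matrix.toEuclideanLin M)‖

noncomputable def frobNorm {m n : ℕ} (M : Matrix (Fin m) (Fin n) ℝ) : ℝ :=
  Real.sqrt (∑ i, ∑ j, (M i j) ^ 2)

noncomputable def euclNorm {k : ℕ} (v : Fin k → ℝ) : ℝ :=
  Real.sqrt (∑ i, (v i) ^ 2)

noncomputable def proj {p r : ℕ} (Γ : Matrix (Fin p) (Fin r) ℝ) : Matrix (Fin p) (Fin p) ℝ :=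
  Γ * (Γᵀ * Γ)⁻¹ * Γᵀ

noncomputable def nthLargestEigenvalue {p : ℕ} (M : Matrix (Fin p) (Fin p) ℝ) (k : ℕ) : ℝ :=
  if h : M.IsHermitian then (List.insertionSort (· ≥ ·) (List.ofFn h.eigenvalues)).getD (k - 1) 0
  else 0

/-
Write `M = Γ Σ_w Γᵀ`, `P = P_Γ` and `λ = λ_r(M)`. Since `M` is positive semidefinite of rank `r`,
`λ` is its smallest nonzero eigenvalue, so `M³ - λ M² ⪰ 0` by functional calculus. Moreover
`P = M N` for `N = Γ (ΓᵀΓ)⁻¹ Σ_w⁻¹ (ΓᵀΓ)⁻¹ Γᵀ` and `P M = M P = M`, so conjugating by `N` gives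
`M - λ P ⪰ 0`, i.e. `P_ℓℓ ≤ M_ℓℓ / λ`. As `P = Pᵀ P` is a Gram matrix, Cauchy–Schwarz gives
`|P_ab| ≤ √(P_aa P_bb) ≤ √(M_aa M_bb) / λ`, and the triangle inequality in `(P B)_ij` finishes.
-/

section AntitoneCount

variable {α : Type*} [PartialOrder α] [Zero α] [DecidableEq α] {n : ℕ} {f : Fin n → α}

theorem Antitone.pos_of_lt_card_ne_zero (hf : Antitone f) (hf0 : ∀ j, 0 ≤ f j) (k : Fin n)
    (hk : k.val < Fintype.card {j // f j ≠ 0}) : 0 < f k := by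
  refine (hf0 k).lt_of_ne' fun hfk => hk.not_ge ?_
  calc Fintype.card {j // f j ≠ 0} = (Finset.univ.filter fun j => f j ≠ 0).card :=
        Fintype.card_subtype _
    _ ≤ (Finset.Iio k).card := Finset.card_le_card fun j hj => by
        simp only [Finset.mem_filter, Finset.mem_univ, true_and] at hj
        by_contra hjk
        exact hj (le_antisymm (hfk ▸ hf (not_lt.1 (by simpa using hjk))) (hf0 j))
    _ = k := Fin.card_Iio k

theorem Antitone.le_of_card_ne_zero_le (hf : Antitone f) (hf0 : ∀ j, 0 ≤ f j) (k : Fin n)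
    (hk : Fintype.card {j // f j ≠ 0} ≤ k.val + 1) (j : Fin n) (hj : f j ≠ 0) : f k ≤ f j := by
  refine (le_or_gt j k).elim (fun hjk => hf hjk) fun hkj => (hk.not_gt ?_).elim
  calc k.val + 1 < (Finset.Iic j).card := by rw [Fin.card_Iic]; omega
    _ ≤ (Finset.univ.filter fun i => f i ≠ 0).card := Finset.card_le_card fun i hi => by
        simp only [Finset.mem_filter, Finset.mem_univ, true_and]
        intro hfi
        exact hj (le_antisymm (hfi ▸ hf (Finset.mem_Iic.1 hi)) (hf0 j))
    _ = Fintype.card {i // f i ≠ 0} := (Fintype.card_subtype _).symm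

end AntitoneCount

theorem Matrix.rank_sub_one_lt_card_height {K m n : Type*} [Field K] [Fintype m] [Fintype n]
    {A : Matrix m n K} (hrank : 0 < A.rank) : A.rank - 1 < Fintype.card m := by
  have := A.rank_le_card_height; omega

theorem Matrix.isUnit_of_rank_eq_card {K n : Type*} [Field K] [Fintype n] [DecidableEq n]
    {A : Matrix n n K} (h : A.rank = Fintype.card n) : IsUnit A :=
  linearIndependent_cols_iff_isUnit.1 <| linearIndependent_iff_card_eq_finrank_span.2 <| by
    rw [← h, rank_eq_finrank_span_cols]; rfl

theorem Matrix.rank_mul_mul_transpose_of_isUnit {K m n : Type*} [Field K] [LinearOrder K]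
    [IsStrictOrderedRing K] [Fintype m] [Fintype n] [DecidableEq n]
    {A : Matrix m n K} (hA : A.rank = Fintype.card n) {S : Matrix n n K} (hS : IsUnit S) :
    (A * S * Aᵀ).rank = Fintype.card n := by
  have hG : IsUnit (Aᵀ * A) := isUnit_of_rank_eq_card (by rw [rank_transpose_mul_self, hA])
  refine le_antisymm (hA ▸ (rank_mul_le_left _ _).trans (rank_mul_le_left _ _)) ?_
  calc Fintype.card n = (Aᵀ * A * S * (Aᵀ * A)).rank := (rank_of_isUnit _ ((hG.mul hS).mul hG)).symm
    _ = (Aᵀ * (A * S * Aᵀ) * A).rank := by simp only [Matrix.mul_assoc]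
    _ ≤ (A * S * Aᵀ).rank := (rank_mul_le_left _ _).trans (rank_mul_le_right _ _)

theorem Matrix.sq_transpose_mul_self_apply_le {m n : Type*} [Fintype m] (A : Matrix m n ℝ)
    (a b : n) : (Aᵀ * A) a b ^ 2 ≤ (Aᵀ * A) a a * (Aᵀ * A) b b := by
  simp only [mul_apply, transpose_apply, ← pow_two]
  exact Finset.sum_mul_sq_le_sq_mul_sq _ _ _

open scoped MatrixOrder in
theorem Matrix.IsHermitian.posSemidef_pow_three_sub_smul_sq {n : Type*} [Fintype n]
    [DecidableEq n] {A : Matrix n n ℝ} (hA : A.IsHermitian) {c : ℝ}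
    (hc : ∀ μ ∈ spectrum ℝ A, μ ≠ 0 → c ≤ μ) : (A ^ 3 - c • A ^ 2).PosSemidef := by
  have hA' : IsSelfAdjoint A := hA
  rw [← nonneg_iff_posSemidef, ← cfc_pow_id (R := ℝ) A 3, ← cfc_pow_id (R := ℝ) A 2,
    ← cfc_const_mul .., ← cfc_sub ..]
  refine cfc_nonneg fun μ hμ => ?_
  rcases eq_or_ne μ 0 with rfl | hμ0
  · simp
  · exact (mul_nonneg (sq_nonneg μ) (sub_nonneg.2 (hc μ hμ hμ0))).trans_eq (by ring)

theorem Matrix.abs_apply_le_of_posSemidef_sub_smul {n : Type*} [Fintype n] {P M : Matrix n n ℝ}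
    (hP : Pᵀ * P = P) {c : ℝ} (hc : 0 < c) (hMP : (M - c • P).PosSemidef) (a b : n) :
    |P a b| ≤ √(M a a) * √(M b b) / c := by
  have hPpsd : P.PosSemidef := by
    simpa [hP, conjTranspose_eq_transpose_of_trivial] using posSemidef_conjTranspose_mul_self P
  have hdiag : ∀ a, P a a ≤ M a a / c := fun a => by
    have := hMP.diag_nonneg (i := a)
    rw [sub_apply, smul_apply, smul_eq_mul, sub_nonneg] at this
    rwa [le_div_iff₀ hc, mul_comm]
  have hMa : 0 ≤ M a a := by
    have := (hPpsd.diag_nonneg (i := a)).trans (hdiag a)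
    rwa [le_div_iff₀ hc, zero_mul] at this
  calc |P a b| ≤ √(P a a * P b b) := Real.abs_le_sqrt (hP ▸ P.sq_transpose_mul_self_apply_le a b)
    _ ≤ √(M a a / c * (M b b / c)) :=
        Real.sqrt_le_sqrt (mul_le_mul (hdiag a) (hdiag b) hPpsd.diag_nonneg (by positivity))
    _ = √(M a a) * √(M b b) / c := by
        rw [div_mul_div_comm, Real.sqrt_div' _ (mul_self_nonneg c), Real.sqrt_mul_self hc.le,
          Real.sqrt_mul hMa]

theorem Matrix.abs_mul_apply_le {m n o : Type*} [Fintype n] {P : Matrix m n ℝ} {i : m} {C : ℝ}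
    (hP : ∀ ℓ, |P i ℓ| ≤ C) (B : Matrix n o ℝ) (j : o) :
    |(P * B) i j| ≤ C * ∑ ℓ, |B ℓ j| := by
  rw [mul_apply, Finset.mul_sum]
  refine (Finset.abs_sum_le_sum_abs _ _).trans (Finset.sum_le_sum fun ℓ _ => ?_)
  rw [abs_mul]
  exact mul_le_mul_of_nonneg_right (hP ℓ) (abs_nonneg _)

namespace Matrix.IsHermitian

variable {n : Type*} [Fintype n] [DecidableEq n] {A : Matrix n n ℝ} (hA : A.IsHermitian)
include hA

theorem range_eigenvalues₀ : Set.range hA.eigenvalues₀ = spectrum ℝ A := by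
  rw [hA.spectrum_real_eq_range_eigenvalues]
  exact (EquivLike.range_comp _ _).symm

theorem card_eigenvalues₀_ne_zero : Fintype.card {k // hA.eigenvalues₀ k ≠ 0} = A.rank := by
  rw [hA.rank_eq_card_non_zero_eigs]
  exact Fintype.card_congr ((Fintype.equivOfCardEq (Fintype.card_fin _)).subtypeEquiv
    fun k => by simp [eigenvalues])

end Matrix.IsHermitian

theorem Matrix.PosSemidef.eigenvalues₀_nonneg {n : Type*} [Fintype n] [DecidableEq n]
    {A : Matrix n n ℝ} (hA : A.PosSemidef) (j : Fin (Fintype.card n)) :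
    0 ≤ hA.1.eigenvalues₀ j := by
  obtain ⟨i, hi⟩ : hA.1.eigenvalues₀ j ∈ Set.range hA.1.eigenvalues := by
    rw [← hA.1.spectrum_real_eq_range_eigenvalues, ← hA.1.range_eigenvalues₀]
    exact Set.mem_range_self j
  exact hi ▸ hA.eigenvalues_nonneg i

theorem nthLargestEigenvalue_eq_eigenvalues₀ {p : ℕ} {A : Matrix (Fin p) (Fin p) ℝ}
    (hA : A.IsHermitian) {k : ℕ} (hk : k - 1 < Fintype.card (Fin p)) :
    nthLargestEigenvalue A k = hA.eigenvalues₀ ⟨k - 1, hk⟩ := by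
  have hperm : (List.ofFn hA.eigenvalues).Perm (List.ofFn hA.eigenvalues₀) := by
    have h := hA.roots_charpoly_eq_eigenvalues.symm.trans hA.roots_charpoly_eq_eigenvalues₀
    rw [← Multiset.coe_eq_coe, ← Fin.univ_val_map, ← Fin.univ_val_map]
    simpa [RCLike.ofReal_real_eq_id] using h
  have hsort : List.insertionSort (· ≥ ·) (List.ofFn hA.eigenvalues) = List.ofFn hA.eigenvalues₀ :=
    ((List.perm_insertionSort _ _).trans hperm).eq_of_sortedGE
      (List.sortedGE_iff_pairwise.2 (List.pairwise_insertionSort _ _))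
      hA.eigenvalues₀_antitone.sortedGE_ofFn
  rw [nthLargestEigenvalue, dif_pos hA, hsort, List.getD_eq_getElem _ _ (by simpa using hk),
    List.getElem_ofFn]

namespace Matrix.PosSemidef

variable {p : ℕ} {A : Matrix (Fin p) (Fin p) ℝ} (hA : A.PosSemidef) (hrank : 0 < A.rank)
include hA hrank

theorem nthLargestEigenvalue_rank_pos : 0 < nthLargestEigenvalue A A.rank := by
  rw [nthLargestEigenvalue_eq_eigenvalues₀ hA.1 (rank_sub_one_lt_card_height hrank)]
  refine hA.1.eigenvalues₀_antitone.pos_of_lt_card_ne_zero hA.eigenvalues₀_nonneg _ ?_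
  rw [hA.1.card_eigenvalues₀_ne_zero]
  exact Nat.sub_lt hrank one_pos

theorem nthLargestEigenvalue_rank_le {μ : ℝ} (hμ : μ ∈ spectrum ℝ A) (hμ0 : μ ≠ 0) :
    nthLargestEigenvalue A A.rank ≤ μ := by
  obtain ⟨j, rfl⟩ : μ ∈ Set.range hA.1.eigenvalues₀ := hA.1.range_eigenvalues₀ ▸ hμ
  rw [nthLargestEigenvalue_eq_eigenvalues₀ hA.1 (rank_sub_one_lt_card_height hrank)]
  refine hA.1.eigenvalues₀_antitone.le_of_card_ne_zero_le hA.eigenvalues₀_nonneg _ ?_ j hμ0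
  rw [hA.1.card_eigenvalues₀_ne_zero]
  exact Nat.le_add_of_sub_le le_rfl

end Matrix.PosSemidef

section Projection

variable {p r : ℕ} {Γ : Matrix (Fin p) (Fin r) ℝ}

theorem proj_transpose (Γ : Matrix (Fin p) (Fin r) ℝ) : (proj Γ)ᵀ = proj Γ := by
  rw [proj, transpose_mul, transpose_mul, transpose_transpose, transpose_nonsing_inv,
    transpose_mul, transpose_transpose, Matrix.mul_assoc]

theorem proj_mul_self (hG : IsUnit (Γᵀ * Γ)) : proj Γ * Γ = Γ := by
  rw [proj, Matrix.mul_assoc, Matrix.mul_assoc, nonsing_inv_mul _ ((isUnit_iff_isUnit_det _).1 hG),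
    Matrix.mul_one]

theorem transpose_mul_proj (hG : IsUnit (Γᵀ * Γ)) : Γᵀ * proj Γ = Γᵀ := by
  rw [← proj_transpose, ← transpose_mul, proj_mul_self hG]

theorem proj_mul_proj (hG : IsUnit (Γᵀ * Γ)) : proj Γ * proj Γ = proj Γ := by
  nth_rewrite 2 [proj]
  rw [← Matrix.mul_assoc, ← Matrix.mul_assoc, proj_mul_self hG, proj]

theorem proj_eq_mul_mul_transpose_mul {S : Matrix (Fin r) (Fin r) ℝ} (hG : IsUnit (Γᵀ * Γ))
    (hS : IsUnit S) :
    proj Γ = Γ * S * Γᵀ * (Γ * ((Γᵀ * Γ)⁻¹ * S⁻¹ * (Γᵀ * Γ)⁻¹) * Γᵀ) := by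
  have hGdet := (isUnit_iff_isUnit_det _).1 hG
  have hSdet := (isUnit_iff_isUnit_det _).1 hS
  calc proj Γ = Γ * (S * ((Γᵀ * Γ) * (Γᵀ * Γ)⁻¹) * S⁻¹ * (Γᵀ * Γ)⁻¹) * Γᵀ := by
        rw [mul_nonsing_inv _ hGdet, Matrix.mul_one, mul_nonsing_inv _ hSdet, Matrix.one_mul,
          proj, Matrix.mul_assoc]
    _ = _ := by simp only [Matrix.mul_assoc]

theorem posSemidef_mul_mul_transpose_sub_smul_proj {S : Matrix (Fin r) (Fin r) ℝ}
    (hG : IsUnit (Γᵀ * Γ)) (hS : S.IsHermitian) (hSu : IsUnit S) {c : ℝ}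
    (hc : ∀ μ ∈ spectrum ℝ (Γ * S * Γᵀ), μ ≠ 0 → c ≤ μ) :
    (Γ * S * Γᵀ - c • proj Γ).PosSemidef := by
  set M := Γ * S * Γᵀ
  set N := Γ * ((Γᵀ * Γ)⁻¹ * S⁻¹ * (Γᵀ * Γ)⁻¹) * Γᵀ
  have hM : M.IsHermitian := by
    simpa [M, conjTranspose_eq_transpose_of_trivial] using isHermitian_mul_mul_conjTranspose Γ hS
  have hMt : Mᵀ = M := by simpa [conjTranspose_eq_transpose_of_trivial] using hM.eq
  have hPMN : proj Γ = M * N := proj_eq_mul_mul_transpose_mul hG hSu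
  have hPM : proj Γ * M = M := by simp only [M, ← Matrix.mul_assoc, proj_mul_self hG]
  have hMP : M * proj Γ = M := by simp only [M, Matrix.mul_assoc, transpose_mul_proj hG]
  have hcube : Nᵀ * M ^ 3 * N = M := by
    calc Nᵀ * M ^ 3 * N = (M * N)ᵀ * M * (M * N) := by
          rw [transpose_mul M N, hMt, pow_succ, pow_two]; simp only [Matrix.mul_assoc]
      _ = M := by rw [← hPMN, proj_transpose, hPM, hMP]
  have hsq : Nᵀ * M ^ 2 * N = proj Γ := by
    calc Nᵀ * M ^ 2 * N = (M * N)ᵀ * (M * N) := by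
          rw [transpose_mul M N, hMt, pow_two]; simp only [Matrix.mul_assoc]
      _ = proj Γ := by rw [← hPMN, proj_transpose, proj_mul_proj hG]
  have key := (hM.posSemidef_pow_three_sub_smul_sq hc).conjTranspose_mul_mul_same N
  rwa [conjTranspose_eq_transpose_of_trivial, Matrix.mul_sub, Matrix.sub_mul, hcube,
    Matrix.mul_smul, Matrix.smul_mul, hsq] at key

end Projection

/-- entrywise bound on `P_Γ B` from the proof of Proposition 2.1. -/
theorem stmt0 {p r d : ℕ} (Γ : Matrix (Fin p) (Fin r) ℝ) (hΓrank : Γ.rank = r)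
    (Sw : Matrix (Fin r) (Fin r) ℝ) (hSw : Sw.PosDef)
    (B : Matrix (Fin p) (Fin d) ℝ) :
    ∀ (i : Fin p) (j : Fin d),
      |(proj Γ * B) i j| ≤
        Real.sqrt (Finset.univ.sup' ⟨i, Finset.mem_univ i⟩
            (fun ℓ => (Γ * Sw * Γᵀ) ℓ ℓ)) *
          Real.sqrt ((Γ * Sw * Γᵀ) i i) * (∑ ℓ, |B ℓ j|) /
            nthLargestEigenvalue (Γ * Sw * Γᵀ) r := by
  intro i j
  rcases Nat.eq_zero_or_pos r with rfl | hr
  · simp [proj, mul_apply]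
  set M := Γ * Sw * Γᵀ
  have hΓ : Γ.rank = Fintype.card (Fin r) := by rw [hΓrank, Fintype.card_fin]
  have hG : IsUnit (Γᵀ * Γ) := isUnit_of_rank_eq_card (by rw [rank_transpose_mul_self, hΓ])
  have hM : M.PosSemidef := by
    simpa [M, conjTranspose_eq_transpose_of_trivial] using
      hSw.posSemidef.mul_mul_conjTranspose_same Γ
  have hrank : M.rank = r := by
    rw [rank_mul_mul_transpose_of_isUnit hΓ hSw.isUnit, Fintype.card_fin]
  have hrank_pos : 0 < M.rank := hrank ▸ hr
  have hpos := hM.nthLargestEigenvalue_rank_pos hrank_pos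
  have hle := fun μ => hM.nthLargestEigenvalue_rank_le hrank_pos (μ := μ)
  rw [hrank] at hpos hle
  have hPM := posSemidef_mul_mul_transpose_sub_smul_proj hG hSw.1 hSw.isUnit hle
  have hP : (proj Γ)ᵀ * proj Γ = proj Γ := by rw [proj_transpose, proj_mul_proj hG]
  have hrow : ∀ ℓ, |proj Γ i ℓ| ≤
      √(Finset.univ.sup' ⟨i, Finset.mem_univ i⟩ fun ℓ => M ℓ ℓ) * √(M i i) /
        nthLargestEigenvalue M r := fun ℓ => by
    refine (abs_apply_le_of_posSemidef_sub_smul hP hpos hPM i ℓ).trans ?_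
    rw [mul_comm (√(M i i))]
    gcongr
    exact Finset.le_sup' (fun ℓ => M ℓ ℓ) (Finset.mem_univ ℓ)
  rw [mul_div_right_comm]
  exact abs_mul_apply_le hrow B j
end

section
/- Let Γ be a real p×r matrix of full column rank r, let Σ_w be a symmetric positive definite r×r real matrix, and let B be a real p×d matrix. Let λ_r(ΓΣ_wΓᵀ) denote the r-th largest eigenvalue of ΓΣ_wΓᵀ. Then ‖P_Γ B‖_F ≤ √p · (max_{1≤ℓ≤p} (ΓΣ_wΓᵀ)_{ℓℓ}) · ‖B‖_{1,1} / λ_r(ΓΣ_wΓᵀ). (Quantitative Frobenius-norm bound of Proposition 2.1 on the non-identified component P_Γ B of the direct effects.) -/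
open Matrix MeasureTheory
open scoped BigOperators ENNReal

/-!
Put `M = Γ Σ_w Γᵀ`. Positive definiteness of `Σ_w` gives `ker M = ker Γᵀ`, so `M` is positive
semidefinite of rank `r` and `λ_r(M)` is its smallest nonzero eigenvalue. For a column `b` of `B`,
`P_Γ b` lies in the range of `Γ`, hence is orthogonal to `ker M`, so the spectral theorem gives
`λ_r(M) ‖P_Γ b‖ ≤ ‖M P_Γ b‖ = ‖M b‖` (as `Γᵀ P_Γ = Γᵀ`). The entries of a positive semidefinite
matrix are bounded by its largest diagonal entry, so `‖M b‖ ≤ √p · max_ℓ M_ℓℓ · ‖b‖₁`, and the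
Frobenius norm is at most the sum of the column norms.
-/

namespace List

theorem Pairwise.getElem_pos_of_lt_countP {l : List ℝ} (hl : l.Pairwise (· ≥ ·)) {k : ℕ}
    (hk : k < l.countP (0 < ·)) : 0 < l[k]'(hk.trans_le (countP_le_length)) := by
  induction l generalizing k with
  | nil => simp at hk
  | cons a t ih =>
    cases k with
    | zero =>
      by_contra! ha
      have : (a :: t).countP (0 < ·) = 0 := by
        refine countP_eq_zero.mpr fun x hx => ?_
        rcases mem_cons.mp hx with rfl | hx
        · simpa using ha
        · simpa using (rel_of_pairwise_cons hl hx).trans ha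
      omega
    | succ k =>
      refine ih hl.of_cons (lt_of_add_lt_add_right (hk.trans_le ?_))
      rw [countP_cons]
      split_ifs <;> omega

theorem Pairwise.getElem_le_of_countP_le {l : List ℝ} (hl : l.Pairwise (· ≥ ·)) {k : ℕ}
    (hk : k < l.length) (hc : l.countP (0 < ·) ≤ k + 1) {x : ℝ} (hx : x ∈ l) (hx0 : 0 < x) :
    l[k] ≤ x := by
  induction l generalizing k with
  | nil => simp at hx
  | cons a t ih =>
    rcases mem_cons.mp hx with rfl | hxt
    · cases k with
      | zero => rfl
      | succ k => exact rel_of_pairwise_cons hl (getElem_mem _)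
    · have ha : 0 < a := hx0.trans_le (rel_of_pairwise_cons hl hxt)
      have hct : 0 < t.countP (0 < ·) := countP_pos_iff.mpr ⟨x, hxt, by simpa using hx0⟩
      rw [countP_cons_of_pos (by simpa using ha)] at hc
      cases k with
      | zero => omega
      | succ k => exact ih hl.of_cons _ (by omega) hxt

theorem countP_ofFn {n : ℕ} (f : Fin n → ℝ) :
    (List.ofFn f).countP (0 < ·) = Fintype.card {i // 0 < f i} := by
  rw [ofFn_eq_map, countP_map, countP_eq_length_filter, Fintype.card_subtype,
    ← toFinset_card_of_nodup ((nodup_finRange n).filter _)]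
  congr 1
  ext i
  simp

end List

theorem euclNorm_eq_norm {k : ℕ} (v : Fin k → ℝ) : euclNorm v = ‖WithLp.toLp 2 v‖ := by
  simp [euclNorm, EuclideanSpace.norm_eq]

theorem euclNorm_nonneg {k : ℕ} (v : Fin k → ℝ) : 0 ≤ euclNorm v := Real.sqrt_nonneg _

theorem euclNorm_le_of_abs_le {k : ℕ} {v : Fin k → ℝ} {C : ℝ} (hv : ∀ i, |v i| ≤ C) :
    euclNorm v ≤ Real.sqrt k * C := by
  rcases Nat.eq_zero_or_pos k with rfl | hk
  · simp [euclNorm]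
  have hC : 0 ≤ C := (abs_nonneg _).trans (hv ⟨0, hk⟩)
  calc euclNorm v ≤ Real.sqrt (∑ _i : Fin k, C ^ 2) :=
        Real.sqrt_le_sqrt <| Finset.sum_le_sum fun i _ =>
          sq_le_sq' (abs_le.mp (hv i)).1 (abs_le.mp (hv i)).2
    _ = Real.sqrt k * C := by
        rw [Finset.sum_const, Finset.card_univ, Fintype.card_fin, nsmul_eq_mul,
          Real.sqrt_mul (Nat.cast_nonneg k), Real.sqrt_sq hC]

theorem euclNorm_mulVec_le {m n : ℕ} {A : Matrix (Fin m) (Fin n) ℝ} {c : ℝ}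
    (hA : ∀ i k, |A i k| ≤ c) (b : Fin n → ℝ) :
    euclNorm (A *ᵥ b) ≤ Real.sqrt m * c * ∑ k, |b k| := by
  rw [mul_assoc]
  refine euclNorm_le_of_abs_le fun i => ?_
  calc |(A *ᵥ b) i| ≤ ∑ k, |A i k| * |b k| := by
        simpa only [mulVec, dotProduct, abs_mul] using
          Finset.abs_sum_le_sum_abs (fun k => A i k * b k) Finset.univ
    _ ≤ ∑ k, c * |b k| := Finset.sum_le_sum fun k _ => by gcongr; exact hA i k
    _ = c * ∑ k, |b k| := (Finset.mul_sum _ _ _).symm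

theorem frobNorm_le_sum_euclNorm_col {m n : ℕ} (A : Matrix (Fin m) (Fin n) ℝ) :
    frobNorm A ≤ ∑ j, euclNorm (fun i => A i j) := by
  have hcol : frobNorm A = Real.sqrt (∑ j, euclNorm (fun i => A i j) ^ 2) := by
    rw [frobNorm, Finset.sum_comm]
    simp only [euclNorm, Real.sq_sqrt (Finset.sum_nonneg fun _ _ => sq_nonneg _)]
  rw [hcol, ← Real.sqrt_sq (Finset.sum_nonneg fun _ _ => euclNorm_nonneg _)]
  exact Real.sqrt_le_sqrt (Finset.sum_sq_le_sq_sum_of_nonneg fun _ _ => euclNorm_nonneg _)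

namespace Matrix

open scoped RealInnerProductSpace

theorem IsHermitian.mul_norm_le_norm_mulVec {n : Type*} [Fintype n] [DecidableEq n]
    {M : Matrix n n ℝ} (hM : M.IsHermitian) {c : ℝ} (hc0 : 0 ≤ c)
    (hc : ∀ i, hM.eigenvalues i ≠ 0 → c ≤ |hM.eigenvalues i|) {v : n → ℝ}
    (hv : ∀ x, M *ᵥ x = 0 → x ⬝ᵥ v = 0) :
    c * ‖WithLp.toLp 2 v‖ ≤ ‖WithLp.toLp 2 (M *ᵥ v)‖ := by
  set b := hM.eigenvectorBasis
  have hcoord : ∀ i, ⟪b i, WithLp.toLp 2 (M *ᵥ v)⟫ = hM.eigenvalues i * ⟪b i, WithLp.toLp 2 v⟫ := by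
    intro i
    have hMt : Mᵀ = M := by simpa using hM.eq
    simp only [EuclideanSpace.inner_eq_star_dotProduct, star_trivial]
    nth_rewrite 1 [← hMt]
    rw [mulVec_transpose, ← dotProduct_mulVec, hM.mulVec_eigenvectorBasis,
      dotProduct_smul, smul_eq_mul]
  have hker : ∀ i, hM.eigenvalues i = 0 → ⟪b i, WithLp.toLp 2 v⟫ = 0 := by
    intro i hi
    rw [EuclideanSpace.inner_eq_star_dotProduct, star_trivial, dotProduct_comm]
    exact hv _ (by rw [hM.mulVec_eigenvectorBasis, hi, zero_smul])
  have hsq : (c * ‖WithLp.toLp 2 v‖) ^ 2 ≤ ‖WithLp.toLp 2 (M *ᵥ v)‖ ^ 2 := by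
    rw [mul_pow, ← b.sum_sq_inner_right, ← b.sum_sq_inner_right, Finset.mul_sum]
    refine Finset.sum_le_sum fun i _ => ?_
    rw [hcoord, mul_pow]
    by_cases hi : hM.eigenvalues i = 0
    · simp [hker i hi]
    · exact mul_le_mul_of_nonneg_right (sq_le_sq.mpr (by rw [abs_of_nonneg hc0]; exact hc i hi))
        (sq_nonneg _)
  exact pow_le_pow_iff_left₀ (by positivity) (norm_nonneg _) two_ne_zero |>.mp hsq

theorem PosSemidef.abs_apply_le {n : Type*} [Fintype n] [DecidableEq n] {M : Matrix n n ℝ}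
    (hM : M.PosSemidef) (i k : n) : |M i k| ≤ (M i i + M k k) / 2 := by
  have hsymm : M k i = M i k := by simpa using hM.isHermitian.apply i k
  have hplus := hM.dotProduct_mulVec_nonneg (Pi.single i 1 + Pi.single k 1)
  have hminus := hM.dotProduct_mulVec_nonneg (Pi.single i 1 - Pi.single k 1)
  simp only [star_trivial, mulVec_add, mulVec_sub, dotProduct_add, dotProduct_sub, add_dotProduct,
    sub_dotProduct, mulVec_single_one, single_dotProduct, col_apply, one_mul] at hplus hminus
  rw [abs_le]
  constructor <;> linarith

theorem PosSemidef.abs_apply_le_iSup_diag {n : Type*} [Fintype n] [DecidableEq n]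
    {M : Matrix n n ℝ} (hM : M.PosSemidef) (i k : n) : |M i k| ≤ ⨆ ℓ, M ℓ ℓ := by
  have hdiag : ∀ j, M j j ≤ ⨆ ℓ, M ℓ ℓ := le_ciSup (Set.finite_range _).bddAbove
  linarith [hM.abs_apply_le i k, hdiag i, hdiag k]

theorem PosDef.mul_mul_transpose_mulVec_eq_zero_iff {m n : Type*} [Fintype m] [Fintype n]
    {S : Matrix n n ℝ} (hS : S.PosDef) (Γ : Matrix m n ℝ) (x : m → ℝ) :
    (Γ * S * Γᵀ) *ᵥ x = 0 ↔ Γᵀ *ᵥ x = 0 := by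
  refine ⟨fun hx => ?_, fun hx => by rw [← mulVec_mulVec, hx, mulVec_zero]⟩
  by_contra hy
  have hquad : x ⬝ᵥ ((Γ * S * Γᵀ) *ᵥ x) = (Γᵀ *ᵥ x) ⬝ᵥ (S *ᵥ (Γᵀ *ᵥ x)) := by
    rw [← mulVec_mulVec, ← mulVec_mulVec, dotProduct_mulVec, ← mulVec_transpose]
  have hpos := hS.dotProduct_mulVec_pos hy
  rw [star_trivial, ← hquad, hx, dotProduct_zero] at hpos
  exact hpos.false

theorem PosDef.rank_mul_mul_transpose {m n : Type*} [Fintype m] [Fintype n] {S : Matrix n n ℝ}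
    (hS : S.PosDef) (Γ : Matrix m n ℝ) : (Γ * S * Γᵀ).rank = Γ.rank := by
  rw [← rank_transpose Γ]
  refine add_left_injective (Module.finrank ℝ (LinearMap.ker Γᵀ.mulVecLin)) ?_
  have hker : LinearMap.ker (Γ * S * Γᵀ).mulVecLin = LinearMap.ker Γᵀ.mulVecLin := by
    ext x
    exact hS.mul_mul_transpose_mulVec_eq_zero_iff Γ x
  dsimp only [rank]
  rw [← hker, LinearMap.finrank_range_add_finrank_ker, hker,
    LinearMap.finrank_range_add_finrank_ker]

theorem isUnit_det_of_rank_eq_card {n K : Type*} [Fintype n] [DecidableEq n] [Field K]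
    {A : Matrix n n K} (hA : A.rank = Fintype.card n) : IsUnit A.det := by
  rw [← isUnit_iff_isUnit_det, ← mulVec_injective_iff_isUnit]
  have hsurj : Function.Surjective A.mulVecLin := by
    rw [← LinearMap.range_eq_top]
    apply Submodule.eq_top_of_finrank_eq
    rw [← rank, hA, Module.finrank_fintype_fun_eq_card]
  exact LinearMap.injective_iff_surjective.mpr hsurj

theorem transpose_mul_proj {p r : ℕ} {Γ : Matrix (Fin p) (Fin r) ℝ} (hΓ : IsUnit (Γᵀ * Γ).det) :
    Γᵀ * proj Γ = Γᵀ := by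
  rw [proj, ← Matrix.mul_assoc, ← Matrix.mul_assoc, mul_nonsing_inv _ hΓ, Matrix.one_mul]

theorem dotProduct_proj_mulVec_eq_zero {p r : ℕ} (Γ : Matrix (Fin p) (Fin r) ℝ) {x : Fin p → ℝ}
    (hx : Γᵀ *ᵥ x = 0) (b : Fin p → ℝ) : x ⬝ᵥ (proj Γ *ᵥ b) = 0 := by
  rw [proj, Matrix.mul_assoc, ← mulVec_mulVec, dotProduct_mulVec, ← mulVec_transpose, hx,
    zero_dotProduct]

section NthLargestEigenvalue

variable {p : ℕ} {M : Matrix (Fin p) (Fin p) ℝ}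

theorem IsHermitian.nthLargestEigenvalue_eq_getElem (hM : M.IsHermitian) {k : ℕ} (hk0 : k ≠ 0)
    (hkp : k ≤ p) :
    nthLargestEigenvalue M k = (List.insertionSort (· ≥ ·) (List.ofFn hM.eigenvalues))[k - 1]'
      (by rw [List.length_insertionSort, List.length_ofFn]; omega) := by
  rw [nthLargestEigenvalue, dif_pos hM, List.getD_eq_getElem]

theorem PosSemidef.countP_pos_insertionSort_eigenvalues (hM : M.PosSemidef) :
    (List.insertionSort (· ≥ ·) (List.ofFn hM.isHermitian.eigenvalues)).countP (0 < ·) =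
      M.rank := by
  rw [(List.perm_insertionSort _ _).countP_eq, List.countP_ofFn,
    hM.isHermitian.rank_eq_card_non_zero_eigs]
  exact Fintype.card_congr <| Equiv.subtypeEquivRight fun i => (hM.eigenvalues_nonneg i).lt_iff_ne'

theorem PosSemidef.nthLargestEigenvalue_pos (hM : M.PosSemidef) {k : ℕ} (hMk : M.rank = k)
    (hk : k ≠ 0) : 0 < nthLargestEigenvalue M k := by
  rw [hM.isHermitian.nthLargestEigenvalue_eq_getElem hk (hMk ▸ M.rank_le_height)]
  exact (List.pairwise_insertionSort _ _).getElem_pos_of_lt_countP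
    (by rw [hM.countP_pos_insertionSort_eigenvalues]; omega)

theorem PosSemidef.nthLargestEigenvalue_le (hM : M.PosSemidef) {k : ℕ} (hMk : M.rank = k)
    (hk : k ≠ 0) {i : Fin p} (hi : hM.isHermitian.eigenvalues i ≠ 0) :
    nthLargestEigenvalue M k ≤ hM.isHermitian.eigenvalues i := by
  rw [hM.isHermitian.nthLargestEigenvalue_eq_getElem hk (hMk ▸ M.rank_le_height)]
  refine (List.pairwise_insertionSort _ _).getElem_le_of_countP_le _
    (by rw [hM.countP_pos_insertionSort_eigenvalues]; omega)
    ((List.perm_insertionSort _ _).mem_iff.mpr (List.mem_ofFn.mpr ⟨i, rfl⟩))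
    ((hM.eigenvalues_nonneg i).lt_of_ne' hi)

end NthLargestEigenvalue

theorem PosDef.posSemidef_mul_mul_transpose {m n : Type*} [Fintype m] [Fintype n]
    {S : Matrix n n ℝ} (hS : S.PosDef) (Γ : Matrix m n ℝ) : (Γ * S * Γᵀ).PosSemidef := by
  simpa using hS.posSemidef.mul_mul_conjTranspose_same Γ

section ProjectionBound

variable {p r : ℕ} {Γ : Matrix (Fin p) (Fin r) ℝ} {Sw : Matrix (Fin r) (Fin r) ℝ}

theorem PosDef.nthLargestEigenvalue_mul_mul_transpose_pos (hSw : Sw.PosDef) (hΓ : Γ.rank = r)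
    (hr : r ≠ 0) : 0 < nthLargestEigenvalue (Γ * Sw * Γᵀ) r :=
  (hSw.posSemidef_mul_mul_transpose Γ).nthLargestEigenvalue_pos
    (by rw [hSw.rank_mul_mul_transpose, hΓ]) hr

theorem PosDef.nthLargestEigenvalue_mul_euclNorm_proj_mulVec_le (hSw : Sw.PosDef)
    (hΓ : Γ.rank = r) (hr : r ≠ 0) (b : Fin p → ℝ) :
    nthLargestEigenvalue (Γ * Sw * Γᵀ) r * euclNorm (proj Γ *ᵥ b) ≤
      Real.sqrt p * (⨆ ℓ, (Γ * Sw * Γᵀ) ℓ ℓ) * ∑ k, |b k| := by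
  set M := Γ * Sw * Γᵀ with hM_def
  have hM : M.PosSemidef := hSw.posSemidef_mul_mul_transpose Γ
  have hrank : M.rank = r := by rw [hSw.rank_mul_mul_transpose, hΓ]
  have hunit : IsUnit (Γᵀ * Γ).det :=
    isUnit_det_of_rank_eq_card (by rw [rank_transpose_mul_self, hΓ, Fintype.card_fin])
  have hMproj : M * proj Γ = M := by
    rw [hM_def, Matrix.mul_assoc, transpose_mul_proj hunit]
  have hmin : ∀ i, hM.isHermitian.eigenvalues i ≠ 0 →
      nthLargestEigenvalue M r ≤ |hM.isHermitian.eigenvalues i| := fun i hi => by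
    rw [abs_of_nonneg (hM.eigenvalues_nonneg i)]
    exact hM.nthLargestEigenvalue_le hrank hr hi
  have hker : ∀ x, M *ᵥ x = 0 → x ⬝ᵥ (proj Γ *ᵥ b) = 0 := fun x hx =>
    dotProduct_proj_mulVec_eq_zero Γ ((hSw.mul_mul_transpose_mulVec_eq_zero_iff Γ x).mp hx) b
  calc nthLargestEigenvalue M r * euclNorm (proj Γ *ᵥ b)
      ≤ euclNorm (M *ᵥ (proj Γ *ᵥ b)) := by
        rw [euclNorm_eq_norm, euclNorm_eq_norm]
        exact hM.isHermitian.mul_norm_le_norm_mulVec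
          (hSw.nthLargestEigenvalue_mul_mul_transpose_pos hΓ hr).le hmin hker
    _ = euclNorm (M *ᵥ b) := by rw [mulVec_mulVec, hMproj]
    _ ≤ Real.sqrt p * (⨆ ℓ, M ℓ ℓ) * ∑ k, |b k| :=
        euclNorm_mulVec_le hM.abs_apply_le_iSup_diag b

end ProjectionBound

end Matrix

/-- Frobenius-norm bound of Proposition 2.1 on the non-identified
component `P_Γ B` of the direct effects. -/
theorem stmt1 {p r d : ℕ} (Γ : Matrix (Fin p) (Fin r) ℝ) (hΓrank : Γ.rank = r)
    (Sw : Matrix (Fin r) (Fin r) ℝ) (hSw : Sw.PosDef)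
    (B : Matrix (Fin p) (Fin d) ℝ) :
    frobNorm (proj Γ * B) ≤
      Real.sqrt p * (⨆ ℓ : Fin p, (Γ * Sw * Γᵀ) ℓ ℓ) * (∑ i, ∑ j, |B i j|) /
        nthLargestEigenvalue (Γ * Sw * Γᵀ) r := by
  rcases eq_or_ne r 0 with rfl | hr
  · simp [proj, frobNorm, Matrix.mul_apply]
  have hpos := hSw.nthLargestEigenvalue_mul_mul_transpose_pos hΓrank hr
  calc frobNorm (proj Γ * B) ≤ ∑ j, euclNorm (proj Γ *ᵥ fun i => B i j) :=
        frobNorm_le_sum_euclNorm_col _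
    _ ≤ ∑ j, Real.sqrt p * (⨆ ℓ, (Γ * Sw * Γᵀ) ℓ ℓ) * (∑ i, |B i j|) /
          nthLargestEigenvalue (Γ * Sw * Γᵀ) r :=
        Finset.sum_le_sum fun j _ => (le_div_iff₀' hpos).mpr <|
          hSw.nthLargestEigenvalue_mul_euclNorm_proj_mulVec_le hΓrank hr _
    _ = _ := by rw [← Finset.sum_div, ← Finset.mul_sum, Finset.sum_comm]
end

section
/- Let R ⊆ ℝ be an open interval and A : ℝ → ℝ be twice differentiable on R with A''(θ) ≥ κ₁ ≥ 0 for all θ ∈ R. Let Y, Θ₁, Θ₂ ∈ ℝ^{n×p} with all entries of Θ₁ and Θ₂ in R, and let r₁ = rank(Θ₁), r₂ = rank(Θ₂). Then L(Θ₂) − L(Θ₁) ≤ (√(r₁+r₂)/n) · ‖Y − A'(Θ₂)‖_op · ‖Θ₁ − Θ₂‖_F − (κ₁/(2n)) · ‖Θ₁ − Θ₂‖_F². (First inequality of Lemma B.1, the upper bound on the likelihood difference.) -/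
open Matrix MeasureTheory
open scoped BigOperators ENNReal

/-- Negative log-likelihood `L(Θ) = (1/n)(−tr(YᵀΘ) + Σ_{i,j} A(Θ_{ij}))`. -/
noncomputable def negLogLik {n p : ℕ} (A : ℝ → ℝ)
    (Y Θ : Matrix (Fin n) (Fin p) ℝ) : ℝ :=
  (1 / (n : ℝ)) * (-(Yᵀ * Θ).trace + ∑ i, ∑ j, A (Θ i j))

/-!
Write `Δ = Θ₁ - Θ₂` and `M = Y - A'(Θ₂)`. Since `A - κ₁ t² / 2` is convex on `R`, every entry
satisfies `A(Θ₂ᵢⱼ) - A(Θ₁ᵢⱼ) ≤ -A'(Θ₂ᵢⱼ) Δᵢⱼ - κ₁ Δᵢⱼ² / 2`, hence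
`n (L(Θ₂) - L(Θ₁)) ≤ ⟨M, Δ⟩_F - κ₁ ‖Δ‖_F² / 2`. For an orthonormal basis `v₁, …, v_r` of the row
space of `Δ` one has `⟨M, Δ⟩_F = ∑ₖ ⟪M vₖ, Δ vₖ⟫` and `∑ₖ ‖Δ vₖ‖² = ‖Δ‖_F²`, so Cauchy–Schwarz gives
`⟨M, Δ⟩_F ≤ √r ‖M‖_op ‖Δ‖_F`, and `r = rank Δ ≤ rank Θ₁ + rank Θ₂`.
-/

open scoped RealInnerProductSpace

theorem ConvexOn.add_mul_sub_le_of_hasDerivAt {S : Set ℝ} {f : ℝ → ℝ} {x y f' : ℝ}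
    (hf : ConvexOn ℝ S f) (hx : x ∈ S) (hy : y ∈ S) (hf' : HasDerivAt f f' x) :
    f x + f' * (y - x) ≤ f y := by
  rcases lt_trichotomy x y with hxy | rfl | hxy
  · have := hf.le_slope_of_hasDerivAt hx hy hxy hf'
    rw [slope_def_field, le_div_iff₀ (sub_pos.2 hxy)] at this
    linarith
  · simp
  · have := hf.slope_le_of_hasDerivAt hy hx hxy hf'
    rw [slope_def_field, div_le_iff₀ (sub_pos.2 hxy)] at this
    linarith

theorem add_mul_sub_add_half_mul_sq_le_of_le_deriv2 {S : Set ℝ} (hS : Convex ℝ S)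
    {f f' f'' : ℝ → ℝ} {κ : ℝ} (hf : ∀ x ∈ S, HasDerivAt f (f' x) x)
    (hf' : ∀ x ∈ S, HasDerivAt f' (f'' x) x) (hκ : ∀ x ∈ S, κ ≤ f'' x)
    {x y : ℝ} (hx : x ∈ S) (hy : y ∈ S) :
    f x + f' x * (y - x) + κ / 2 * (y - x) ^ 2 ≤ f y := by
  have hg : ∀ t ∈ S, HasDerivAt (fun t => f t - κ / 2 * t ^ 2) (f' t - κ * t) t := fun t ht =>
    ((hf t ht).sub ((hasDerivAt_pow 2 t).const_mul (κ / 2))).congr_deriv (by ring)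
  have hg' : ∀ t ∈ S, HasDerivAt (fun t => f' t - κ * t) (f'' t - κ) t := fun t ht =>
    ((hf' t ht).sub ((hasDerivAt_id' t).const_mul κ)).congr_deriv (by ring)
  have hconv : ConvexOn ℝ S fun t => f t - κ / 2 * t ^ 2 :=
    convexOn_of_hasDerivWithinAt2_nonneg hS
      (fun t ht => (hg t ht).continuousAt.continuousWithinAt)
      (fun t ht => (hg t (interior_subset ht)).hasDerivWithinAt)
      (fun t ht => (hg' t (interior_subset ht)).hasDerivWithinAt)
      (fun t ht => sub_nonneg.2 (hκ t (interior_subset ht)))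
  have := hconv.add_mul_sub_le_of_hasDerivAt hx hy (hg x hx)
  nlinarith

theorem EuclideanSpace.real_inner_eq_sum {ι : Type*} [Fintype ι] (x y : EuclideanSpace ℝ ι) :
    ⟪x, y⟫ = ∑ i, x i * y i := by
  simp only [PiLp.inner_apply, RCLike.inner_apply, Real.ringHom_apply, mul_comm]

theorem OrthonormalBasis.sum_inner_mul_inner_of_mem {E ι : Type*} [NormedAddCommGroup E]
    [InnerProductSpace ℝ E] [Fintype ι] {W : Submodule ℝ E} (b : OrthonormalBasis ι ℝ W)
    (x : E) {y : E} (hy : y ∈ W) :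
    ∑ k, ⟪(b k : E), x⟫ * ⟪(b k : E), y⟫ = ⟪x, y⟫ := by
  conv_rhs => rw [← show ((∑ k, ⟪b k, ⟨y, hy⟩⟫ • b k : W) : E) = y from
    congrArg Subtype.val (b.sum_repr' ⟨y, hy⟩)]
  simp [inner_sum, inner_smul_right, mul_comm, real_inner_comm]

theorem Matrix.toEuclideanLin_apply_eq_inner {m n : Type*} [Fintype n] [DecidableEq n]
    (N : Matrix m n ℝ) (v : EuclideanSpace ℝ n) (i : m) :
    toEuclideanLin N v i = ⟪v, WithLp.toLp 2 (N i)⟫ := by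
  simp [EuclideanSpace.real_inner_eq_sum, Matrix.mulVec, dotProduct, mul_comm]

theorem Matrix.sum_inner_toEuclideanLin_of_rows_mem {m n ι : Type*} [Fintype m] [Fintype n]
    [DecidableEq n] [Fintype ι] {W : Submodule ℝ (EuclideanSpace ℝ n)}
    (b : OrthonormalBasis ι ℝ W) (M D : Matrix m n ℝ) (hD : ∀ i, WithLp.toLp 2 (D i) ∈ W) :
    ∑ k, ⟪toEuclideanLin M (b k), toEuclideanLin D (b k)⟫ = ∑ i, ∑ j, M i j * D i j := by
  calc ∑ k, ⟪toEuclideanLin M (b k), toEuclideanLin D (b k)⟫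
      = ∑ k, ∑ i, ⟪(b k : EuclideanSpace ℝ n), WithLp.toLp 2 (M i)⟫ *
          ⟪(b k : EuclideanSpace ℝ n), WithLp.toLp 2 (D i)⟫ := by
        simp only [EuclideanSpace.real_inner_eq_sum (toEuclideanLin M _),
          toEuclideanLin_apply_eq_inner]
    _ = ∑ i, ⟪WithLp.toLp 2 (M i), WithLp.toLp 2 (D i)⟫ := by
        rw [Finset.sum_comm]
        simp only [b.sum_inner_mul_inner_of_mem _ (hD _)]
    _ = ∑ i, ∑ j, M i j * D i j := by
        simp only [EuclideanSpace.real_inner_eq_sum]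

theorem Matrix.finrank_span_rows_eq_rank {m n : Type*} [Fintype m] [Fintype n] [DecidableEq n]
    (D : Matrix m n ℝ) :
    Module.finrank ℝ (Submodule.span ℝ (Set.range fun i => WithLp.toLp 2 (D i))) = D.rank := by
  rw [D.rank_eq_finrank_span_row,
    ← LinearEquiv.finrank_map_eq (WithLp.linearEquiv 2 ℝ (n → ℝ)).symm, Submodule.map_span,
    ← Set.range_comp]
  rfl

theorem Matrix.rank_sub_le {m n : Type*} [Fintype m] [Fintype n] {R : Type*} [Field R]
    (A B : Matrix m n R) : (A - B).rank ≤ A.rank + B.rank := by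
  have hle : LinearMap.range (A - B).mulVecLin ≤
      LinearMap.range A.mulVecLin ⊔ LinearMap.range B.mulVecLin := by
    rintro _ ⟨x, rfl⟩
    rw [mulVecLin_apply, sub_mulVec]
    exact Submodule.sub_mem _ (Submodule.mem_sup_left ⟨x, rfl⟩)
      (Submodule.mem_sup_right ⟨x, rfl⟩)
  exact (Submodule.finrank_mono hle).trans (Submodule.finrank_add_le_finrank_add_finrank _ _)

theorem opNorm_nonneg {m n : ℕ} (M : Matrix (Fin m) (Fin n) ℝ) : 0 ≤ opNorm M :=
  norm_nonneg _

theorem norm_toEuclideanLin_le_opNorm {m n : ℕ} (M : Matrix (Fin m) (Fin n) ℝ)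
    (v : EuclideanSpace ℝ (Fin n)) : ‖toEuclideanLin M v‖ ≤ opNorm M * ‖v‖ :=
  (LinearMap.toContinuousLinearMap (toEuclideanLin M)).le_opNorm v

theorem frobNorm_nonneg {m n : ℕ} (M : Matrix (Fin m) (Fin n) ℝ) : 0 ≤ frobNorm M :=
  Real.sqrt_nonneg _

theorem frobNorm_sq {m n : ℕ} (M : Matrix (Fin m) (Fin n) ℝ) :
    frobNorm M ^ 2 = ∑ i, ∑ j, M i j ^ 2 :=
  Real.sq_sqrt (by positivity)

theorem sum_mul_le_sqrt_finrank_mul_opNorm_mul_frobNorm {n p : ℕ}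
    (M D : Matrix (Fin n) (Fin p) ℝ) (W : Submodule ℝ (EuclideanSpace ℝ (Fin p)))
    (hD : ∀ i, WithLp.toLp 2 (D i) ∈ W) :
    ∑ i, ∑ j, M i j * D i j ≤ √(Module.finrank ℝ W) * opNorm M * frobNorm D := by
  set b := stdOrthonormalBasis ℝ W
  have hM : ∀ k, ‖toEuclideanLin M (b k)‖ ≤ opNorm M := fun k => by
    simpa only [show ‖(b k : EuclideanSpace ℝ (Fin p))‖ = 1 from b.orthonormal.1 k, mul_one]
      using norm_toEuclideanLin_le_opNorm M (b k)
  have hD_sq : ∑ k, ‖toEuclideanLin D (b k)‖ ^ 2 = frobNorm D ^ 2 := by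
    have := sum_inner_toEuclideanLin_of_rows_mem b D D hD
    simp only [real_inner_self_eq_norm_sq, ← sq] at this
    rw [this, frobNorm_sq]
  calc ∑ i, ∑ j, M i j * D i j
      = ∑ k, ⟪toEuclideanLin M (b k), toEuclideanLin D (b k)⟫ :=
        (sum_inner_toEuclideanLin_of_rows_mem b M D hD).symm
    _ ≤ ∑ k, opNorm M * ‖toEuclideanLin D (b k)‖ := by
        gcongr with k
        exact (real_inner_le_norm _ _).trans (mul_le_mul_of_nonneg_right (hM k) (norm_nonneg _))
    _ = opNorm M * ∑ k, 1 * ‖toEuclideanLin D (b k)‖ := by simp only [one_mul, Finset.mul_sum]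
    _ ≤ opNorm M * (√(∑ _k : Fin (Module.finrank ℝ W), (1 : ℝ) ^ 2) *
          √(∑ k, ‖toEuclideanLin D (b k)‖ ^ 2)) := by
        gcongr
        · exact opNorm_nonneg M
        · exact Real.sum_mul_le_sqrt_mul_sqrt _ _ _
    _ = √(Module.finrank ℝ W) * opNorm M * frobNorm D := by
        simp only [hD_sq, Real.sqrt_sq (frobNorm_nonneg D), one_pow, Finset.sum_const,
          Finset.card_univ, Fintype.card_fin, nsmul_eq_mul, mul_one]
        ring

theorem sum_mul_le_sqrt_rank_mul_opNorm_mul_frobNorm {n p : ℕ} (M D : Matrix (Fin n) (Fin p) ℝ) :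
    ∑ i, ∑ j, M i j * D i j ≤ √(D.rank : ℝ) * opNorm M * frobNorm D := by
  simpa only [D.finrank_span_rows_eq_rank] using
    sum_mul_le_sqrt_finrank_mul_opNorm_mul_frobNorm M D _ fun i =>
      Submodule.subset_span (Set.mem_range_self i)

theorem Matrix.trace_transpose_mul_eq_sum {m n : Type*} [Fintype m] [Fintype n]
    (Y Θ : Matrix m n ℝ) : (Yᵀ * Θ).trace = ∑ i, ∑ j, Y i j * Θ i j := by
  simp only [trace, diag, mul_apply, transpose_apply]
  exact Finset.sum_comm

theorem negLogLik_sub_negLogLik {n p : ℕ} (A : ℝ → ℝ) (Y Θ₁ Θ₂ : Matrix (Fin n) (Fin p) ℝ) :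
    negLogLik A Y Θ₂ - negLogLik A Y Θ₁ =
      1 / n * ∑ i, ∑ j, (Y i j * (Θ₁ - Θ₂) i j + (A (Θ₂ i j) - A (Θ₁ i j))) := by
  simp only [negLogLik, trace_transpose_mul_eq_sum, Matrix.sub_apply, mul_sub,
    Finset.sum_add_distrib, Finset.sum_sub_distrib]
  ring

theorem stmt6_general {n p : ℕ} (R : Set ℝ) (hRconv : Convex ℝ R)
    (A A' A'' : ℝ → ℝ)
    (hA' : ∀ θ ∈ R, HasDerivAt A (A' θ) θ)
    (hA'' : ∀ θ ∈ R, HasDerivAt A' (A'' θ) θ)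
    (κ₁ : ℝ) (hκ₁le : ∀ θ ∈ R, κ₁ ≤ A'' θ)
    (Y Θ₁ Θ₂ : Matrix (Fin n) (Fin p) ℝ)
    (hΘ₁ : ∀ i j, Θ₁ i j ∈ R) (hΘ₂ : ∀ i j, Θ₂ i j ∈ R) :
    negLogLik A Y Θ₂ - negLogLik A Y Θ₁ ≤
      (Real.sqrt ((Θ₁.rank : ℝ) + (Θ₂.rank : ℝ)) / (n : ℝ)) *
          opNorm (Y - Matrix.of fun i j => A' (Θ₂ i j)) * frobNorm (Θ₁ - Θ₂) -
        (κ₁ / (2 * (n : ℝ))) * frobNorm (Θ₁ - Θ₂) ^ 2 := by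
  set Δ := Θ₁ - Θ₂
  set M := Y - Matrix.of fun i j => A' (Θ₂ i j)
  have hentry : ∀ i j, Y i j * Δ i j + (A (Θ₂ i j) - A (Θ₁ i j)) ≤
      M i j * Δ i j - κ₁ / 2 * Δ i j ^ 2 := fun i j => by
    have := add_mul_sub_add_half_mul_sq_le_of_le_deriv2 hRconv hA' hA'' hκ₁le
      (hΘ₂ i j) (hΘ₁ i j)
    simp only [Δ, M, Matrix.sub_apply, of_apply]
    linarith
  have hrank : √(Δ.rank : ℝ) ≤ √((Θ₁.rank : ℝ) + Θ₂.rank) :=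
    Real.sqrt_le_sqrt (by exact_mod_cast Θ₁.rank_sub_le Θ₂)
  calc negLogLik A Y Θ₂ - negLogLik A Y Θ₁
      = 1 / n * ∑ i, ∑ j, (Y i j * Δ i j + (A (Θ₂ i j) - A (Θ₁ i j))) :=
        negLogLik_sub_negLogLik A Y Θ₁ Θ₂
    _ ≤ 1 / n * (∑ i, ∑ j, M i j * Δ i j - κ₁ / 2 * frobNorm Δ ^ 2) := by
        gcongr
        rw [frobNorm_sq, Finset.mul_sum, ← Finset.sum_sub_distrib]
        gcongr with i _
        rw [Finset.mul_sum, ← Finset.sum_sub_distrib]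
        gcongr with j _
        exact hentry i j
    _ ≤ 1 / n * (√((Θ₁.rank : ℝ) + Θ₂.rank) * opNorm M * frobNorm Δ -
          κ₁ / 2 * frobNorm Δ ^ 2) := by
        gcongr
        exact (sum_mul_le_sqrt_rank_mul_opNorm_mul_frobNorm M Δ).trans <|
          mul_le_mul_of_nonneg_right (mul_le_mul_of_nonneg_right hrank (opNorm_nonneg M))
            (frobNorm_nonneg Δ)
    _ = _ := by ring

/-- first inequality of Lemma B.1 (upper bound on the likelihood
difference, with curvature lower bound `κ₁`). -/
theorem stmt6 {n p : ℕ} (R : Set ℝ) (hRopen : IsOpen R) (hRconv : Convex ℝ R)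
    (A A' A'' : ℝ → ℝ)
    (hA' : ∀ θ ∈ R, HasDerivAt A (A' θ) θ)
    (hA'' : ∀ θ ∈ R, HasDerivAt A' (A'' θ) θ)
    (κ₁ : ℝ) (hκ₁ : 0 ≤ κ₁) (hκ₁le : ∀ θ ∈ R, κ₁ ≤ A'' θ)
    (Y Θ₁ Θ₂ : Matrix (Fin n) (Fin p) ℝ)
    (hΘ₁ : ∀ i j, Θ₁ i j ∈ R) (hΘ₂ : ∀ i j, Θ₂ i j ∈ R) :
    negLogLik A Y Θ₂ - negLogLik A Y Θ₁ ≤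
      (Real.sqrt ((Θ₁.rank : ℝ) + (Θ₂.rank : ℝ)) / (n : ℝ)) *
          opNorm (Y - Matrix.of fun i j => A' (Θ₂ i j)) * frobNorm (Θ₁ - Θ₂) -
        (κ₁ / (2 * (n : ℝ))) * frobNorm (Θ₁ - Θ₂) ^ 2 :=
  stmt6_general R hRconv A A' A'' hA' hA'' κ₁ hκ₁le Y Θ₁ Θ₂ hΘ₁ hΘ₂
end

section
/- Let E, Δ ∈ ℝ^{n×p} and set Ê := E + Δ. Suppose Ê = √(np)·U Σ Vᵀ, where U ∈ ℝ^{n×r} and V ∈ ℝ^{p×r} satisfy UᵀU = VᵀV = I_r and Σ ∈ ℝ^{r×r} is diagonal with strictly positive diagonal entries. Define Γ̂ := √p·V Σ^{1/2} and Γ̃ := (1/(n√p))·EᵀE V Σ^{−3/2}, and let γ̂_j, γ̃_j denote their j-th rows and E_j, Δ_j the j-th columns of E, Δ. Then for every j ∈ {1,…,p}: ‖γ̂_j − γ̃_j‖₂ ≤ (1/(n√p))·(‖E‖_op‖Δ_j‖₂ + ‖Δ‖_op‖E_j‖₂ + ‖Δ‖_op‖Δ_j‖₂)·‖Σ^{−3/2}‖_op,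 and moreover ‖Γ̂ − Γ̃‖_op ≤ (1/(n√p))·(2‖E‖_op‖Δ‖_op + ‖Δ‖_op²)·‖Σ^{−3/2}‖_op. (Row-wise and operator-norm bounds from the proof of Lemma C.1.) -/
open Matrix MeasureTheory
open scoped BigOperators ENNReal

/-!
Since `Ê V = √(np) U Σ`, one has `ÊᵀÊ V Σ^{-3/2} = np V Σ^{1/2}`, i.e.
`Γ̂ = (1/(n√p)) ÊᵀÊ V Σ^{-3/2}`. Hence `Γ̂ - Γ̃ = (1/(n√p)) (ÊᵀÊ - EᵀE) V Σ^{-3/2}` with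
`ÊᵀÊ - EᵀE = EᵀΔ + ΔᵀE + ΔᵀΔ`, and both bounds follow from submultiplicativity of the
operator norm together with `‖V‖ ≤ 1`.
-/

open scoped Matrix.Norms.L2Operator

lemma sq_mul_rpow_neg_three_halves {x : ℝ} (hx : 0 < x) : x ^ 2 * x ^ (-(3 / 2) : ℝ) = √x := by
  rw [← Real.rpow_natCast, ← Real.rpow_add hx, Real.sqrt_eq_rpow]
  norm_num

lemma opNorm_eq_l2_opNorm {m n : ℕ} (M : Matrix (Fin m) (Fin n) ℝ) : opNorm M = ‖M‖ := rfl

namespace Matrix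

variable {k l m n : Type*} [Fintype k] [Fintype l] [Fintype m] [Fintype n]

lemma l2_opNorm_transpose [DecidableEq m] [DecidableEq n] (A : Matrix m n ℝ) : ‖Aᵀ‖ = ‖A‖ := by
  rw [← conjTranspose_eq_transpose_of_trivial, l2_opNorm_conjTranspose]

lemma l2_opNorm_le_one_of_transpose_mul_self_eq_one [DecidableEq n] {V : Matrix m n ℝ}
    (hV : Vᵀ * V = 1) : ‖V‖ ≤ 1 := by
  have hone : ‖(1 : Matrix n n ℝ)‖ ≤ 1 := by
    rw [← diagonal_one, l2_opNorm_diagonal]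
    exact (pi_norm_const_le 1).trans (by simp)
  have hsq : ‖V‖ * ‖V‖ ≤ 1 := by
    rwa [← l2_opNorm_conjTranspose_mul_self, conjTranspose_eq_transpose_of_trivial, hV]
  nlinarith [norm_nonneg V]

lemma l2_opNorm_mul_le_of_transpose_mul_self_eq_one [DecidableEq l] [DecidableEq n]
    {V : Matrix m n ℝ} (hV : Vᵀ * V = 1) (D : Matrix n l ℝ) : ‖V * D‖ ≤ ‖D‖ :=
  (l2_opNorm_mul V D).trans <|
    mul_le_of_le_one_left (norm_nonneg D) (l2_opNorm_le_one_of_transpose_mul_self_eq_one hV)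

lemma transpose_mul_self_mul_eq_of_svd {R : Type*} [CommRing R] [DecidableEq k]
    {U : Matrix m k R} {V : Matrix n k R} (hU : Uᵀ * U = 1) (hV : Vᵀ * V = 1) (d : k → R) :
    (U * diagonal d * Vᵀ)ᵀ * (U * diagonal d * Vᵀ) * V = V * diagonal (d ^ 2) := by
  simp only [transpose_mul, transpose_transpose, diagonal_transpose, Matrix.mul_assoc, hV,
    Matrix.mul_one]
  rw [← Matrix.mul_assoc Uᵀ, hU, Matrix.one_mul, diagonal_mul_diagonal, sq]
  rfl

lemma transpose_mul_self_mul_diagonal_rpow_of_svd [DecidableEq k] {U : Matrix m k ℝ}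
    {V : Matrix n k ℝ} (hU : Uᵀ * U = 1) (hV : Vᵀ * V = 1) {σ : k → ℝ} (hσ : ∀ i, 0 < σ i) {s : ℝ}
    {A : Matrix m n ℝ} (hA : A = s • (U * diagonal σ * Vᵀ)) :
    Aᵀ * A * (V * diagonal fun i => σ i ^ (-(3 / 2) : ℝ)) =
      s ^ 2 • (V * diagonal fun i => √(σ i)) := by
  simp only [hA, transpose_smul, Matrix.smul_mul, Matrix.mul_smul, smul_smul]
  rw [← sq, ← Matrix.mul_assoc, transpose_mul_self_mul_eq_of_svd hU hV, Matrix.mul_assoc,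
    diagonal_mul_diagonal]
  congr 3 with i
  exact sq_mul_rpow_neg_three_halves (hσ i)

end Matrix

def gramIncrement {n p : Type*} [Fintype n] (E Δ : Matrix n p ℝ) : Matrix p p ℝ :=
  Eᵀ * Δ + Δᵀ * E + Δᵀ * Δ

lemma transpose_mul_self_add_eq {n p : Type*} [Fintype n] (E Δ : Matrix n p ℝ) :
    (E + Δ)ᵀ * (E + Δ) = Eᵀ * E + gramIncrement E Δ := by
  rw [gramIncrement, transpose_add, Matrix.add_mul, Matrix.mul_add, Matrix.mul_add]
  abel

lemma l2_opNorm_gramIncrement_le {n p : Type*} [Fintype n] [Fintype p] [DecidableEq n]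
    [DecidableEq p] (E Δ : Matrix n p ℝ) :
    ‖gramIncrement E Δ‖ ≤ 2 * ‖E‖ * ‖Δ‖ + ‖Δ‖ ^ 2 := by
  have htr (X Y : Matrix n p ℝ) : ‖Xᵀ * Y‖ ≤ ‖X‖ * ‖Y‖ :=
    (l2_opNorm_mul Xᵀ Y).trans_eq (by rw [l2_opNorm_transpose])
  calc ‖gramIncrement E Δ‖ ≤ ‖Eᵀ * Δ‖ + ‖Δᵀ * E‖ + ‖Δᵀ * Δ‖ := norm_add₃_le
    _ ≤ ‖E‖ * ‖Δ‖ + ‖Δ‖ * ‖E‖ + ‖Δ‖ * ‖Δ‖ := by gcongr <;> exact htr _ _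
    _ = 2 * ‖E‖ * ‖Δ‖ + ‖Δ‖ ^ 2 := by ring

lemma euclNorm_eq_norm_toLp {k : ℕ} (v : Fin k → ℝ) :
    euclNorm v = ‖(WithLp.toLp 2 v : EuclideanSpace ℝ (Fin k))‖ := by
  simp [euclNorm, EuclideanSpace.norm_eq, sq_abs]

lemma euclNorm_smul {k : ℕ} (c : ℝ) (v : Fin k → ℝ) : euclNorm (c • v) = |c| * euclNorm v := by
  rw [euclNorm_eq_norm_toLp, euclNorm_eq_norm_toLp, WithLp.toLp_smul, norm_smul,
    Real.norm_eq_abs]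

lemma euclNorm_add_le {k : ℕ} (u v : Fin k → ℝ) : euclNorm (u + v) ≤ euclNorm u + euclNorm v := by
  simpa only [euclNorm_eq_norm_toLp, WithLp.toLp_add] using norm_add_le _ _

lemma euclNorm_vecMul_le {a b : ℕ} (x : Fin a → ℝ) (M : Matrix (Fin a) (Fin b) ℝ) :
    euclNorm (x ᵥ* M) ≤ ‖M‖ * euclNorm x := by
  rw [euclNorm_eq_norm_toLp, euclNorm_eq_norm_toLp, ← mulVec_transpose, ← l2_opNorm_transpose M]
  exact l2_opNorm_mulVec Mᵀ _

lemma euclNorm_row_mul_le {a b c : ℕ} (A : Matrix (Fin a) (Fin b) ℝ)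
    (B : Matrix (Fin b) (Fin c) ℝ) (i : Fin a) : euclNorm ((A * B) i) ≤ ‖B‖ * euclNorm (A i) :=
  euclNorm_vecMul_le (A i) B

lemma euclNorm_row_gramIncrement_le {n p : ℕ} (E Δ : Matrix (Fin n) (Fin p) ℝ) (j : Fin p) :
    euclNorm (gramIncrement E Δ j) ≤
      ‖E‖ * euclNorm (fun i => Δ i j) + ‖Δ‖ * euclNorm (fun i => E i j) +
        ‖Δ‖ * euclNorm (fun i => Δ i j) := by
  calc euclNorm (gramIncrement E Δ j)
      ≤ euclNorm ((Eᵀ * Δ) j) + euclNorm ((Δᵀ * E) j) + euclNorm ((Δᵀ * Δ) j) :=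
        (euclNorm_add_le _ _).trans (add_le_add_left (euclNorm_add_le _ _) _)
    _ ≤ ‖Δ‖ * euclNorm (fun i => E i j) + ‖E‖ * euclNorm (fun i => Δ i j) +
          ‖Δ‖ * euclNorm (fun i => Δ i j) := by
        gcongr <;> exact euclNorm_row_mul_le _ _ j
    _ = _ := by ring

lemma sqrt_smul_mul_diagonal_sqrt_eq {n p r : ℕ} {E Δ : Matrix (Fin n) (Fin p) ℝ}
    {U : Matrix (Fin n) (Fin r) ℝ} {V : Matrix (Fin p) (Fin r) ℝ} (hU : Uᵀ * U = 1)
    (hV : Vᵀ * V = 1) {σ : Fin r → ℝ} (hσ : ∀ i, 0 < σ i)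
    (hsvd : E + Δ = √((n : ℝ) * p) • (U * diagonal σ * Vᵀ)) :
    √p • (V * diagonal fun i => √(σ i)) = (1 / ((n : ℝ) * √p)) •
      ((E + Δ)ᵀ * (E + Δ) * (V * diagonal fun i => σ i ^ (-(3 / 2) : ℝ))) := by
  rw [transpose_mul_self_mul_diagonal_rpow_of_svd hU hV hσ hsvd, smul_smul,
    Real.sq_sqrt (by positivity)]
  rcases eq_or_ne n 0 with rfl | hn
  · -- here `1 / (0 * √p) = 0`, but with no rows `Uᵀ * U = 1` forces `r = 0`
    have h10 : (1 : Matrix (Fin r) (Fin r) ℝ) = 0 := by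
      rw [← hU]; ext; simp [mul_apply]
    rw [← Matrix.mul_one (V * _), h10]
    simp
  · rw [div_mul_eq_mul_div, one_mul, mul_div_mul_left _ _ (Nat.cast_ne_zero.mpr hn),
      Real.div_sqrt]

/-- row-wise and operator-norm bounds on `Γ̂ − Γ̃` from the proof of
Lemma C.1, where `Ê = E + Δ = √(np)·U Σ Vᵀ`, `Γ̂ = √p·V Σ^{1/2}` and
`Γ̃ = (1/(n√p))·EᵀE V Σ^{−3/2}`. -/
theorem stmt13 {n p r : ℕ} (E Δ : Matrix (Fin n) (Fin p) ℝ)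
    (U : Matrix (Fin n) (Fin r) ℝ) (V : Matrix (Fin p) (Fin r) ℝ)
    (S : Matrix (Fin r) (Fin r) ℝ)
    (hU : Uᵀ * U = 1) (hV : Vᵀ * V = 1)
    (hSdiag : ∀ i j, i ≠ j → S i j = 0) (hSpos : ∀ i, 0 < S i i)
    (hsvd : E + Δ = Real.sqrt ((n : ℝ) * p) • (U * S * Vᵀ))
    (Γh Γt : Matrix (Fin p) (Fin r) ℝ)
    (hΓh : Γh = Real.sqrt p • (V * Matrix.diagonal fun i => Real.sqrt (S i i)))
    (hΓt : Γt = (1 / ((n : ℝ) * Real.sqrt p)) •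
      (Eᵀ * E * V * Matrix.diagonal fun i => (S i i) ^ (-(3 / 2) : ℝ))) :
    (∀ j : Fin p,
      euclNorm (Γh j - Γt j) ≤
        (1 / ((n : ℝ) * Real.sqrt p)) *
          (opNorm E * euclNorm (fun i => Δ i j) +
            opNorm Δ * euclNorm (fun i => E i j) +
              opNorm Δ * euclNorm (fun i => Δ i j)) *
            opNorm (Matrix.diagonal fun i => (S i i) ^ (-(3 / 2) : ℝ))) ∧
    opNorm (Γh - Γt) ≤
      (1 / ((n : ℝ) * Real.sqrt p)) *
        (2 * opNorm E * opNorm Δ + opNorm Δ ^ 2) *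
          opNorm (Matrix.diagonal fun i => (S i i) ^ (-(3 / 2) : ℝ)) := by
  set c : ℝ := 1 / ((n : ℝ) * √p)
  set D := diagonal fun i => S i i ^ (-(3 / 2) : ℝ)
  have hS : S = diagonal S.diag := ((isDiag_iff_diagonal_diag S).mp hSdiag).symm
  rw [hS] at hsvd
  have hkey : Γh - Γt = c • (gramIncrement E Δ * (V * D)) := by
    rw [hΓh, hΓt, sqrt_smul_mul_diagonal_sqrt_eq hU hV hSpos hsvd, transpose_mul_self_add_eq,
      Matrix.add_mul, ← smul_sub, Matrix.mul_assoc (Eᵀ * E), add_sub_cancel_left]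
  have hc : 0 ≤ c := by positivity
  have hVD : ‖V * D‖ ≤ ‖D‖ := l2_opNorm_mul_le_of_transpose_mul_self_eq_one hV D
  simp only [opNorm_eq_l2_opNorm]
  refine ⟨fun j => ?_, ?_⟩
  · calc euclNorm (Γh j - Γt j) = c * euclNorm ((gramIncrement E Δ * (V * D)) j) := by
          rw [show Γh j - Γt j = c • (gramIncrement E Δ * (V * D)) j from congrFun hkey j,
            euclNorm_smul, abs_of_nonneg hc]
      _ ≤ c * (‖V * D‖ * euclNorm (gramIncrement E Δ j)) := by
          gcongr; exact euclNorm_row_mul_le _ _ j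
      _ ≤ c * (‖D‖ * (‖E‖ * euclNorm (fun i => Δ i j) + ‖Δ‖ * euclNorm (fun i => E i j) +
            ‖Δ‖ * euclNorm (fun i => Δ i j))) := by
          gcongr
          exacts [Real.sqrt_nonneg _, euclNorm_row_gramIncrement_le E Δ j]
      _ = _ := by ring
  · calc ‖Γh - Γt‖ = c * ‖gramIncrement E Δ * (V * D)‖ := by
          rw [hkey, norm_smul, Real.norm_of_nonneg hc]
      _ ≤ c * (‖gramIncrement E Δ‖ * ‖V * D‖) := by gcongr; exact l2_opNorm_mul _ _
      _ ≤ c * ((2 * ‖E‖ * ‖Δ‖ + ‖Δ‖ ^ 2) * ‖D‖) := by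
          gcongr; exact l2_opNorm_gramIncrement_le E Δ
      _ = _ := by ring
end
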